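/- For integers $j,k,l$ with $k \ge 0$, $b \mid l$, and $0 \le r < b$, one has the identity $w_{j+1,kb+r,l/b}(x) = b^{-1/2}\sum_{s=0}^{b-1} \mathrm{wal}_r(s/b)\, w_{j,k,l+s}(x)$ for all $x \in \mathbb{R}$. -/

import Mathlib

open MeasureTheory Complex
open scoped BigOperators Classical

/-- The `k`-th base-`b` Walsh function on `[0,1)`, extended by zero to `ℝ`. -/
noncomputable def wal (b : ℕ) (k : ℕ) (x : ℝ) : ℂ :=
  if x ∈ Set.Ico (0:ℝ) 1 then
    Complex.exp (2 * Real.pi * Complex.I / b *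
      (∑ i ∈ Finset.range (k+1), ((k / b ^ i % b : ℕ) : ℂ) * ((⌊x * (b:ℝ) ^ (i+1)⌋ % (b:ℤ) : ℤ) : ℂ)))
  else 0

/-- The dilated and translated Walsh function `w_{j,k,l}(x) = b^{-j/2} wal_k (b^{-j} x - l)`. -/
noncomputable def wdil (b : ℕ) (j : ℤ) (k : ℕ) (l : ℤ) (x : ℝ) : ℂ :=
  (((b:ℝ) ^ (-(j:ℝ)/2) : ℝ) : ℂ) * wal b k ((b:ℝ) ^ (-j) * x - (l:ℝ))

/-- The tile `T_{j,k,l} = [b^j l, b^j(l+1)) × [b^{-j} k, b^{-j}(k+1))`. -/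
def tile (b : ℕ) (j : ℤ) (k : ℕ) (l : ℤ) : Set (ℝ × ℝ) :=
  Set.Ico ((b:ℝ)^j * (l:ℝ)) ((b:ℝ)^j * ((l:ℝ)+1)) ×ˢ
  Set.Ico ((b:ℝ)^(-j) * (k:ℝ)) ((b:ℝ)^(-j) * ((k:ℝ)+1))

lemma wal_zero_of_not_mem (b k : ℕ) {x : ℝ} (h : x ∉ Set.Ico (0:ℝ) 1) : wal b k x = 0 := by
  simp [wal, h]

lemma digit_zero {b k : ℕ} (hb : 2 ≤ b) {m : ℕ} (hm : k + 1 ≤ m) : k / b ^ m % b = 0 := by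
  have h1 : k < b ^ m := by
    calc k < 2 ^ k := Nat.lt_two_pow_self
    _ ≤ 2 ^ m := Nat.pow_le_pow_right (by norm_num) (by omega)
    _ ≤ b ^ m := Nat.pow_le_pow_left hb m
  rw [Nat.div_eq_of_lt h1, Nat.zero_mod]

lemma wal_rec (b : ℕ) (hb : 2 ≤ b) (k r : ℕ) (hr : r < b) (y : ℝ) :
    wal b (k*b+r) (y/b) = ∑ i ∈ Finset.range b, wal b r ((i:ℝ)/b) * wal b k (y - i) := by
  have hb0 : (0:ℝ) < b := by positivity
  by_cases hy : y ∈ Set.Ico (0:ℝ) (b:ℝ)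
  · obtain ⟨hy0, hyb⟩ := hy
    have hfl0 : 0 ≤ ⌊y⌋ := Int.floor_nonneg.mpr hy0
    have hflb : ⌊y⌋ < b := Int.floor_lt.mpr (by exact_mod_cast hyb)
    set i₀ : ℕ := ⌊y⌋.toNat with hi₀def
    have hfl : ⌊y⌋ = (i₀:ℤ) := (Int.toNat_of_nonneg hfl0).symm
    have hi₀b : i₀ < b := by omega
    have hyi : (i₀:ℝ) ≤ y := by
      have := Int.floor_le y; rw [hfl] at this; exact_mod_cast this
    have hyi1 : y < (i₀:ℝ) + 1 := by
      have := Int.lt_floor_add_one y; rw [hfl] at this; exact_mod_cast this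
    have ht : y - (i₀:ℝ) ∈ Set.Ico (0:ℝ) 1 := ⟨by linarith, by linarith⟩
    rw [Finset.sum_eq_single_of_mem i₀ (Finset.mem_range.mpr hi₀b) (by
      intro i _ hne
      have : y - (i:ℝ) ∉ Set.Ico (0:ℝ) 1 := by
        rintro ⟨h2, h3⟩
        have : ⌊y⌋ = (i:ℤ) := Int.floor_eq_iff.mpr ⟨by push_cast; linarith, by push_cast; linarith⟩
        rw [hfl] at this
        exact hne (by exact_mod_cast this.symm)
      rw [wal_zero_of_not_mem b k this, mul_zero])]
    -- compute wal b r (i₀/b)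
    have hwr : wal b r ((i₀:ℝ)/b) = Complex.exp (2 * Real.pi * Complex.I / b * ((r:ℂ) * (i₀:ℂ))) := by
      have hmem : (i₀:ℝ)/b ∈ Set.Ico (0:ℝ) 1 :=
        ⟨by positivity, (div_lt_one hb0).mpr (by exact_mod_cast hi₀b)⟩
      rw [wal, if_pos hmem]
      congr 1
      congr 1
      rw [Finset.sum_eq_single_of_mem 0 (Finset.mem_range.mpr (Nat.succ_pos r)) (by
        intro i _ hi
        have h1 : r / b ^ i = 0 := Nat.div_eq_of_lt (lt_of_lt_of_le hr (Nat.le_self_pow hi b))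
        rw [h1, Nat.zero_mod]; simp)]
      have h1 : (i₀:ℝ)/b * (b:ℝ)^(0+1) = (i₀:ℝ) := by field_simp; ring
      rw [h1, Int.floor_natCast]
      have h2 : ((i₀:ℤ)) % (b:ℤ) = (i₀:ℤ) := Int.emod_eq_of_lt (by positivity) (by exact_mod_cast hi₀b)
      rw [h2]
      have h3 : r / b ^ 0 % b = r := by simp [Nat.mod_eq_of_lt hr]
      rw [h3]
      push_cast
      ring
    have hyb1 : y / b ∈ Set.Ico (0:ℝ) 1 := ⟨by positivity, (div_lt_one hb0).mpr hyb⟩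
    rw [hwr, wal, if_pos hyb1, wal, if_pos ht]
    rw [← Complex.exp_add, ← mul_add]
    congr 1
    congr 1
    -- key sum identity
    rw [Finset.sum_range_succ']
    have hf0 : (((k*b+r) / b ^ 0 % b : ℕ) : ℂ) * ((⌊y/(b:ℝ) * (b:ℝ)^(0+1)⌋ % (b:ℤ) : ℤ) : ℂ)
        = (r:ℂ) * (i₀:ℂ) := by
      have h1 : y/(b:ℝ) * (b:ℝ)^(0+1) = y := by field_simp; ring
      rw [h1, hfl]
      have h2 : ((i₀:ℤ)) % (b:ℤ) = (i₀:ℤ) := Int.emod_eq_of_lt (by positivity) (by exact_mod_cast hi₀b)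
      rw [h2]
      have h3 : (k*b+r) / b ^ 0 % b = r := by
        rw [pow_zero, Nat.div_one, Nat.mul_comm k b, Nat.mul_add_mod, Nat.mod_eq_of_lt hr]
      rw [h3]
      push_cast; ring
    have hfs : ∀ i : ℕ, (((k*b+r) / b ^ (i+1) % b : ℕ) : ℂ) * ((⌊y/(b:ℝ) * (b:ℝ)^(i+1+1)⌋ % (b:ℤ) : ℤ) : ℂ)
        = ((k / b ^ i % b : ℕ) : ℂ) * ((⌊(y - (i₀:ℝ)) * (b:ℝ)^(i+1)⌋ % (b:ℤ) : ℤ) : ℂ) := by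
      intro i
      have hd : (k*b+r) / b ^ (i+1) = k / b ^ i := by
        rw [pow_succ', ← Nat.div_div_eq_div_mul]
        congr 1
        rw [add_comm, Nat.add_mul_div_right _ _ (by omega : 0 < b), Nat.div_eq_of_lt hr, zero_add]
      have hfloor : ⌊y/(b:ℝ) * (b:ℝ)^(i+1+1)⌋ % (b:ℤ) = ⌊(y - (i₀:ℝ)) * (b:ℝ)^(i+1)⌋ % (b:ℤ) := by
        have h1 : y/(b:ℝ) * (b:ℝ)^(i+1+1) = (y - (i₀:ℝ)) * (b:ℝ)^(i+1) + ((i₀ * b ^ i * b : ℕ) : ℝ) := by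
          push_cast
          field_simp
          ring
        rw [h1, Int.floor_add_natCast]
        push_cast
        rw [Int.add_mul_emod_self_right]
      rw [hd, hfloor]
    rw [hf0, Finset.sum_congr rfl (fun i _ => hfs i), add_comm]
    congr 1
    -- range change
    rcases Nat.eq_zero_or_pos k with hk | hk
    · subst hk
      trans (0:ℂ)
      · apply Finset.sum_eq_zero; intro i _; simp
      · symm; apply Finset.sum_eq_zero; intro i _; simp
    · have hle : k + 1 ≤ k*b + r := by nlinarith
      symm
      apply Finset.sum_subset (Finset.range_subset_range.mpr hle)
      intro i _ hni
      have hki : k + 1 ≤ i := by simp only [Finset.mem_range] at hni; omega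
      rw [digit_zero hb hki]
      simp
  · have h1 : y/b ∉ Set.Ico (0:ℝ) 1 := by
      rintro ⟨h2, h3⟩
      refine hy ⟨?_, (div_lt_one hb0).mp h3⟩
      have := mul_nonneg h2 hb0.le
      rwa [div_mul_cancel₀ _ (ne_of_gt hb0)] at this
    rw [wal_zero_of_not_mem b _ h1]
    symm
    apply Finset.sum_eq_zero
    intro i hi
    have hib : (i:ℝ) + 1 ≤ b := by exact_mod_cast Finset.mem_range.mp hi
    have : y - (i:ℝ) ∉ Set.Ico (0:ℝ) 1 := by
      rintro ⟨h2, h3⟩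
      exact hy ⟨by linarith [show (0:ℝ) ≤ (i:ℝ) from i.cast_nonneg], by linarith⟩
    rw [wal_zero_of_not_mem b k this, mul_zero]

theorem stmt_3 (b : ℕ) (hb : 2 ≤ b) (j l : ℤ) (k : ℕ) (hl : (b:ℤ) ∣ l)
    (r : ℕ) (hr : r < b) (x : ℝ) :
    wdil b (j+1) (k * b + r) (l / b) x =
      (((b:ℝ) ^ (-(1:ℝ)/2) : ℝ) : ℂ) *
        ∑ i ∈ Finset.range b, wal b r ((i:ℝ)/(b:ℝ)) * wdil b j k (l + (i:ℕ)) x := by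
  have hb0 : (0:ℝ) < b := by positivity
  obtain ⟨c, rfl⟩ := hl
  have hdiv : (b:ℤ) * c / b = c :=
    Int.mul_ediv_cancel_left c (Int.natCast_ne_zero.mpr (by omega))
  simp only [wdil, hdiv]
  have harg : (b:ℝ) ^ (-(j+1)) * x - ((c:ℤ):ℝ) = ((b:ℝ)^(-j) * x - (((b:ℤ)*c : ℤ):ℝ)) / b := by
    rw [show -(j+1) = -j + (-1) by ring, zpow_add₀ (ne_of_gt hb0)]
    push_cast
    field_simp
  rw [harg, wal_rec b hb k r hr]
  rw [Finset.mul_sum, Finset.mul_sum]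
  apply Finset.sum_congr rfl
  intro i _
  have hpow : (b:ℝ) ^ (-((j+1:ℤ):ℝ)/2) = (b:ℝ)^(-(1:ℝ)/2) * (b:ℝ)^(-((j:ℤ):ℝ)/2) := by
    rw [← Real.rpow_add hb0]; congr 1; push_cast; ring
  rw [hpow]
  have hargs : (b:ℝ)^(-j) * x - (((b:ℤ)*c + (i:ℕ) : ℤ):ℝ) =
      ((b:ℝ)^(-j) * x - (((b:ℤ)*c:ℤ):ℝ)) - (i:ℝ) := by push_cast; ring
  rw [hargs]
  push_cast
  ring
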